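/- arXiv:2112.04669 — 3 statements merged into one kernel-verified Lean document; each statement's English description precedes it below -/
import Mathlib

section
/- Let m, ℓ, r be positive integers and ε ∈ (0,1). Set k = ⌈3m/(εr)⌉. If I₁,…,I_ℓ are independently chosen uniformly random k-element subsets of [m] and ln ℓ ≤ m/r, then with probability at least 1 − e^{−m}, the union of any r distinct subsets among I₁,…,I_ℓ has size at least (1−ε)m. -/
open scoped Classical

/-!
If the sets `I i, i ∈ T` cover fewer than `(1 - ε) m` points, they all avoid a common set `W` of
`⌈ε m⌉` points. For fixed `T` and `W` this has probability `(C(m - |W|, k) / C(m, k)) ^ r`, and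
`C(m - w, k) / C(m, k) ≤ ((m - w) / m) ^ k ≤ (1 - ε) ^ k ≤ e ^ (-ε k)`, so by the choice of `k` it is
at most `e ^ (-3 m)`. A union bound over the at most `ℓ ^ r ≤ e ^ m` sets `T` and `2 ^ m ≤ e ^ m`
sets `W` leaves failure probability `e ^ (-m)`.
-/

open Finset

namespace Nat

theorem descFactorial_mul_pow_le_descFactorial_mul_pow {a b : ℕ} (hab : a ≤ b) (k : ℕ) :
    a.descFactorial k * b ^ k ≤ b.descFactorial k * a ^ k := by
  induction k with
  | zero => simp
  | succ k ih =>
    have hstep : (a - k) * b ≤ (b - k) * a := by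
      rw [Nat.sub_mul, Nat.sub_mul, mul_comm a b]
      exact Nat.sub_le_sub_left (Nat.mul_le_mul_left k hab) _
    rw [descFactorial_succ, descFactorial_succ, pow_succ, pow_succ]
    calc (a - k) * a.descFactorial k * (b ^ k * b)
        = ((a - k) * b) * (a.descFactorial k * b ^ k) := by ring
      _ ≤ ((b - k) * a) * (b.descFactorial k * a ^ k) := Nat.mul_le_mul hstep ih
      _ = (b - k) * b.descFactorial k * (a ^ k * a) := by ring

theorem choose_mul_pow_le_choose_mul_pow {a b : ℕ} (hab : a ≤ b) (k : ℕ) :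
    a.choose k * b ^ k ≤ b.choose k * a ^ k := by
  have h := descFactorial_mul_pow_le_descFactorial_mul_pow hab k
  rw [descFactorial_eq_factorial_mul_choose, descFactorial_eq_factorial_mul_choose,
    mul_assoc, mul_assoc] at h
  exact Nat.le_of_mul_le_mul_left h k.factorial_pos

theorem cast_choose_le_div_pow_mul_choose {a b : ℕ} (hab : a ≤ b) (k : ℕ) :
    (a.choose k : ℝ) ≤ ((a : ℝ) / b) ^ k * b.choose k := by
  rcases b.eq_zero_or_pos with rfl | hb
  · obtain rfl : a = 0 := Nat.le_zero.1 hab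
    cases k <;> simp
  · rw [div_pow, div_mul_eq_mul_div, le_div_iff₀ (by positivity), mul_comm _ (b.choose k : ℝ)]
    exact_mod_cast choose_mul_pow_le_choose_mul_pow hab k

theorem cast_choose_le_exp_mul_log (n r : ℕ) :
    (n.choose r : ℝ) ≤ Real.exp (r * Real.log n) := by
  refine (Nat.cast_le.2 (n.choose_le_pow r)).trans ?_
  rcases n.eq_zero_or_pos with rfl | hn
  · rcases r.eq_zero_or_pos with rfl | hr <;> simp [*, zero_pow, Nat.pos_iff_ne_zero.1]
  · rw [Real.exp_nat_mul, Real.exp_log (by exact_mod_cast hn), Nat.cast_pow]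

theorem cast_choose_le_exp (n k : ℕ) : (n.choose k : ℝ) ≤ Real.exp n := by
  calc (n.choose k : ℝ) ≤ (2 : ℝ) ^ n := by exact_mod_cast n.choose_le_two_pow k
    _ ≤ Real.exp 1 ^ n := by gcongr; linarith [Real.add_one_le_exp (1 : ℝ)]
    _ = Real.exp n := by rw [← Real.exp_nat_mul, mul_one]

end Nat

theorem cast_sub_ceil_div_pow_le_exp (n k : ℕ) {ε : ℝ} (hε : ε ≤ 1) :
    (((n - ⌈ε * n⌉₊ : ℕ) : ℝ) / n) ^ k ≤ Real.exp (-(ε * k)) := by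
  have hsub : ((n - ⌈ε * n⌉₊ : ℕ) : ℝ) ≤ (1 - ε) * n := by
    rcases le_total ⌈ε * n⌉₊ n with h | h
    · rw [Nat.cast_sub h]
      linarith [Nat.le_ceil (ε * n)]
    · rw [Nat.sub_eq_zero_of_le h, Nat.cast_zero]
      exact mul_nonneg (by linarith) n.cast_nonneg
  have hbase : ((n - ⌈ε * n⌉₊ : ℕ) : ℝ) / n ≤ Real.exp (-ε) :=
    (div_le_of_le_mul₀ n.cast_nonneg (by linarith) hsub).trans
      (by linarith [Real.add_one_le_exp (-ε)])
  calc (((n - ⌈ε * n⌉₊ : ℕ) : ℝ) / n) ^ k ≤ Real.exp (-ε) ^ k := by gcongr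
    _ = Real.exp (-(ε * k)) := by rw [← Real.exp_nat_mul]; ring_nf

theorem Finset.one_sub_mul_card_le_card_filter {β : Type*} {s : Finset β} {p : β → Prop}
    [DecidablePred p] {δ : ℝ} (h : (#{x ∈ s | ¬ p x} : ℝ) ≤ δ * #s) :
    (1 - δ) * #s ≤ #{x ∈ s | p x} := by
  have hsplit := congrArg (Nat.cast : ℕ → ℝ) (card_filter_add_card_filter_not (s := s) p)
  push_cast at hsplit
  linarith

section Disperser

variable {α ι : Type*} [Fintype α] [DecidableEq α] [Fintype ι] [DecidableEq ι]

def IsDisperser (r : ℕ) (ε : ℝ) (I : ι → Finset α) : Prop :=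
  ∀ T : Finset ι, #T = r → (1 - ε) * Fintype.card α ≤ #(T.biUnion I)

theorem card_subsets_disjoint (k : ℕ) (W : Finset α) :
    #{s : {s : Finset α // #s = k} | Disjoint s.1 W} = (Fintype.card α - #W).choose k := by
  rw [← card_compl, ← card_powersetCard]
  refine card_bij (fun s _ => s.1) (fun s hs => ?_) (fun s _ t _ h => Subtype.ext h)
    (fun s hs => ?_)
  · rw [mem_powersetCard, subset_compl_iff_disjoint_right]
    exact ⟨(mem_filter.1 hs).2, s.2⟩
  · rw [mem_powersetCard, subset_compl_iff_disjoint_right] at hs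
    exact ⟨⟨s, hs.2⟩, mem_filter.2 ⟨mem_univ _, hs.1⟩, rfl⟩

def tuplesAvoiding (k : ℕ) (T : Finset ι) (W : Finset α) :
    Finset (ι → {s : Finset α // #s = k}) :=
  Fintype.piFinset fun i =>
    if i ∈ T then univ.filter (fun s : {s : Finset α // #s = k} => Disjoint s.1 W) else univ

theorem mem_tuplesAvoiding {k : ℕ} {T : Finset ι} {W : Finset α}
    {I : ι → {s : Finset α // #s = k}} :
    I ∈ tuplesAvoiding k T W ↔ ∀ i ∈ T, Disjoint (I i).1 W := by
  simp only [tuplesAvoiding, Fintype.mem_piFinset]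
  refine forall_congr' fun i => ?_
  split_ifs with hi <;> simp [hi]

theorem card_tuplesAvoiding_le (k : ℕ) (T : Finset ι) (W : Finset α) :
    (#(tuplesAvoiding k T W) : ℝ) ≤
      ((((Fintype.card α - #W : ℕ) : ℝ) / Fintype.card α) ^ k) ^ #T *
        ((Fintype.card α).choose k : ℝ) ^ Fintype.card ι := by
  set q := (((Fintype.card α - #W : ℕ) : ℝ) / Fintype.card α) ^ k
  set N := ((Fintype.card α).choose k : ℝ)
  have hfactor : ∀ i, (#(if i ∈ T then univ.filter (fun s : {s : Finset α // #s = k} =>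
      Disjoint s.1 W) else univ) : ℝ) ≤ (if i ∈ T then q else 1) * N := by
    intro i
    split_ifs
    · rw [card_subsets_disjoint]
      exact Nat.cast_choose_le_div_pow_mul_choose (Nat.sub_le _ _) k
    · simp [N, Fintype.card_finset_len]
  calc (#(tuplesAvoiding k T W) : ℝ)
      ≤ ∏ i, (if i ∈ T then q else 1) * N := by
        rw [tuplesAvoiding, Fintype.card_piFinset, Nat.cast_prod]
        exact prod_le_prod (fun _ _ => Nat.cast_nonneg _) fun i _ => hfactor i
    _ = q ^ #T * N ^ Fintype.card ι := by
        rw [prod_mul_distrib, Fintype.prod_ite_mem, prod_const, prod_const, card_univ]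

theorem ceil_mul_card_le_card_compl {U : Finset α} {ε : ℝ}
    (hU : (#U : ℝ) < (1 - ε) * Fintype.card α) : ⌈ε * Fintype.card α⌉₊ ≤ #Uᶜ := by
  rw [Nat.ceil_le, card_compl, Nat.cast_sub (card_le_univ U)]
  linarith

theorem exists_mem_tuplesAvoiding_of_not_isDisperser {k r : ℕ} {ε : ℝ}
    {I : ι → {s : Finset α // #s = k}} (hI : ¬ IsDisperser r ε fun i => (I i).1) :
    ∃ T W, #T = r ∧ #W = ⌈ε * Fintype.card α⌉₊ ∧ I ∈ tuplesAvoiding k T W := by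
  simp only [IsDisperser, not_forall, not_le] at hI
  obtain ⟨T, hT, hsmall⟩ := hI
  obtain ⟨W, hW, hWcard⟩ := exists_subset_card_eq (ceil_mul_card_le_card_compl hsmall)
  refine ⟨T, W, hT, hWcard, mem_tuplesAvoiding.2 fun i hi => ?_⟩
  exact (disjoint_compl_right.mono_left
    (subset_biUnion_of_mem (fun j => (I j).1) hi)).mono_right hW

theorem card_not_isDisperser_le (r k : ℕ) (ε : ℝ) :
    (#{I : ι → {s : Finset α // #s = k} | ¬ IsDisperser r ε fun i => (I i).1} : ℝ) ≤
      (Fintype.card ι).choose r * (Fintype.card α).choose ⌈ε * Fintype.card α⌉₊ *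
        ((((Fintype.card α - ⌈ε * Fintype.card α⌉₊ : ℕ) : ℝ) / Fintype.card α) ^ k) ^ r *
          ((Fintype.card α).choose k : ℝ) ^ Fintype.card ι := by
  set t := ⌈ε * Fintype.card α⌉₊
  set pairs := (univ : Finset ι).powersetCard r ×ˢ (univ : Finset α).powersetCard t
  have hcover : ({I : ι → {s : Finset α // #s = k} | ¬ IsDisperser r ε fun i => (I i).1} :
      Finset _) ⊆ pairs.biUnion fun p => tuplesAvoiding k p.1 p.2 := by
    intro I hI
    obtain ⟨T, W, hT, hW, hIW⟩ := exists_mem_tuplesAvoiding_of_not_isDisperser (mem_filter.1 hI).2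
    exact mem_biUnion.2 ⟨(T, W), mem_product.2 ⟨by simpa using hT, by simpa using hW⟩, hIW⟩
  calc _ ≤ (#(pairs.biUnion fun p => tuplesAvoiding k p.1 p.2) : ℝ) := by
        exact_mod_cast card_le_card hcover
    _ ≤ ∑ p ∈ pairs, (#(tuplesAvoiding k p.1 p.2) : ℝ) := by exact_mod_cast card_biUnion_le
    _ ≤ ∑ p ∈ pairs, ((((Fintype.card α - t : ℕ) : ℝ) / Fintype.card α) ^ k) ^ r *
          ((Fintype.card α).choose k : ℝ) ^ Fintype.card ι := by
        refine sum_le_sum fun p hp => ?_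
        obtain ⟨hT, hW⟩ := mem_product.1 hp
        rw [mem_powersetCard_univ] at hT hW
        simpa [hT, hW] using card_tuplesAvoiding_le k p.1 p.2
    _ = _ := by
        rw [sum_const, card_product, card_powersetCard, card_powersetCard, card_univ, card_univ,
          nsmul_eq_mul]
        push_cast
        ring

end Disperser

theorem stmt_0_general (m ℓ r : ℕ) (hr : 0 < r)
    (ε : ℝ) (hε : ε ∈ Set.Ioo (0:ℝ) 1)
    (k : ℕ) (hk : k = ⌈(3 * m) / (ε * r)⌉₊)
    (hlog : Real.log ℓ ≤ (m : ℝ) / r) :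
    (1 - Real.exp (-(m : ℝ))) *
        (Finset.univ : Finset (Fin ℓ → {s : Finset (Fin m) // s.card = k})).card ≤
      ((Finset.univ.filter
          (fun I : Fin ℓ → {s : Finset (Fin m) // s.card = k} =>
            ∀ T : Finset (Fin ℓ), T.card = r →
              (1 - ε) * m ≤ ((T.biUnion (fun i => (I i).1)).card : ℝ))).card : ℝ) := by
  obtain ⟨hε0, hε1⟩ := hε
  have hr' : (0 : ℝ) < r := by exact_mod_cast hr
  have hkr : 3 * (m : ℝ) ≤ ε * k * r := by
    have := Nat.le_ceil ((3 * m) / (ε * r))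
    rw [← hk, div_le_iff₀ (by positivity)] at this
    linarith
  have hdecay : ((((m - ⌈ε * m⌉₊ : ℕ) : ℝ) / m) ^ k) ^ r ≤ Real.exp (-(3 * m)) :=
    calc _ ≤ Real.exp (-(ε * k)) ^ r := by gcongr; exact cast_sub_ceil_div_pow_le_exp m k hε1.le
      _ ≤ Real.exp (-(3 * m)) := by
          rw [← Real.exp_nat_mul]
          exact Real.exp_le_exp.2 (by nlinarith)
  have hchoose : (ℓ.choose r : ℝ) ≤ Real.exp m :=
    (ℓ.cast_choose_le_exp_mul_log r).trans (Real.exp_le_exp.2 (by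
      rwa [le_div_iff₀ hr', mul_comm] at hlog))
  have hcount := card_not_isDisperser_le (α := Fin m) (ι := Fin ℓ) r k ε
  simp only [IsDisperser, Fintype.card_fin] at hcount
  refine one_sub_mul_card_le_card_filter (hcount.trans ?_)
  calc _ ≤ Real.exp m * Real.exp m * Real.exp (-(3 * m)) * (m.choose k : ℝ) ^ ℓ := by
        gcongr
        exact m.cast_choose_le_exp _
    _ = _ := by
        rw [← Real.exp_add, ← Real.exp_add, card_univ, Fintype.card_fun, Fintype.card_finset_len,
          Fintype.card_fin, Fintype.card_fin, Nat.cast_pow]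
        ring_nf

/-- random k-subsets form a disperser with probability ≥ 1 - e^{-m}. -/
theorem stmt_0 (m ℓ r : ℕ) (hm : 0 < m) (hℓ : 0 < ℓ) (hr : 0 < r)
    (ε : ℝ) (hε : ε ∈ Set.Ioo (0:ℝ) 1)
    (k : ℕ) (hk : k = ⌈(3 * m) / (ε * r)⌉₊)
    (hlog : Real.log ℓ ≤ (m : ℝ) / r) :
    (1 - Real.exp (-(m : ℝ))) *
        (Finset.univ : Finset (Fin ℓ → {s : Finset (Fin m) // s.card = k})).card ≤
      ((Finset.univ.filter
          (fun I : Fin ℓ → {s : Finset (Fin m) // s.card = k} =>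
            ∀ T : Finset (Fin ℓ), T.card = r →
              (1 - ε) * m ≤ ((T.biUnion (fun i => (I i).1)).card : ℝ))).card : ℝ) :=
  stmt_0_general m ℓ r hr ε hε k hk hlog
end

section
/- Let Γ be a MinLabel instance with left super-nodes U₁,…,U_ℓ and right super-nodes W₁,…,W_h. If there exists a multi-labeling S ⊆ W of size |S| ≤ γ^{-1/h}·h covering every left super-node, then there exists a labeling (picking exactly one vertex from each W_j ∩ S, assuming each W_j ∩ S is nonempty) that in expectation (under the uniform random choice from each W_j ∩ S) covers at least a γ fraction of the left super-nodes; hence MaxCover(Γ) ≥ γ. -/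
open scoped Classical BigOperators

/-- if a multi-labeling S of size ≤ γ^{-1/h}·h covers every left super-node,
    then the uniform random labeling drawn from the sets W_j ∩ S covers in expectation
    at least a γ fraction of left super-nodes; hence MaxCover(Γ) ≥ γ. -/
theorem stmt_8 (ℓ h : ℕ) (hℓ : 0 < ℓ) (hh : 0 < h)
    (Vu Vw : Type) [Fintype Vu] [Fintype Vw]
    (uPart : Vu → Fin ℓ) (wPart : Vw → Fin h) (E : Vu → Vw → Prop)
    (γ : ℝ) (hγ : 0 < γ)
    (S : Finset Vw)
    (hsize : (S.card : ℝ) ≤ γ ^ (-(1 : ℝ) / h) * h)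
    (hne : ∀ j : Fin h, ∃ w ∈ S, wPart w = j)
    (hcov : ∀ i : Fin ℓ, ∃ u : Vu, uPart u = i ∧
      ∀ j : Fin h, ∃ w ∈ S, wPart w = j ∧ E u w) :
    -- the set of labelings picking one vertex from each W_j ∩ S
    let L : Finset (Fin h → Vw) :=
      Finset.univ.filter (fun g => ∀ j, g j ∈ S ∧ wPart (g j) = j)
    -- the fraction of left super-nodes covered by a labeling g
    let frac : (Fin h → Vw) → ℝ := fun g =>
      ((Finset.univ.filter
        (fun i : Fin ℓ => ∃ u : Vu, uPart u = i ∧ ∀ j, E u (g j))).card : ℝ) / ℓ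
    γ ≤ (∑ g ∈ L, frac g) / L.card ∧
    ∃ g ∈ L, γ ≤ frac g := by
  intro L frac
  have hhR : (0 : ℝ) < (h : ℝ) := by exact_mod_cast hh
  have hℓR : (0 : ℝ) < (ℓ : ℝ) := by exact_mod_cast hℓ
  set T : Fin h → Finset Vw := fun j => S.filter (fun w => wPart w = j) with hT
  have hLdef : L = Fintype.piFinset T := by
    ext g
    simp [L, hT, Fintype.mem_piFinset, Finset.mem_filter]
  have hcardL : L.card = ∏ j, (T j).card := by
    rw [hLdef, Fintype.card_piFinset]
  have hTpos : ∀ j, 0 < (T j).card := by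
    intro j
    obtain ⟨w, hw, hwj⟩ := hne j
    exact Finset.card_pos.mpr ⟨w, Finset.mem_filter.mpr ⟨hw, hwj⟩⟩
  -- the fibers T j partition S
  have hsumT : ∑ j, (T j).card = S.card := by
    rw [hT]
    exact (Finset.card_eq_sum_card_fiberwise (fun x _ => Finset.mem_univ (wPart x))).symm
  -- AM-GM: ∏ |T j| ≤ (|S|/h)^h ≤ γ⁻¹
  have hprod_le : (∏ j, ((T j).card : ℝ)) ≤ γ⁻¹ := by
    have hz : ∀ j ∈ (Finset.univ : Finset (Fin h)), (0:ℝ) ≤ ((T j).card : ℝ) :=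
      fun j _ => Nat.cast_nonneg _
    have hw : ∀ j ∈ (Finset.univ : Finset (Fin h)), (0:ℝ) ≤ (1 / (h:ℝ)) :=
      fun j _ => by positivity
    have hw1 : ∑ _j : Fin h, (1 / (h:ℝ)) = 1 := by
      simp [Finset.sum_const, Finset.card_univ]
      field_simp
    have hAM := Real.geom_mean_le_arith_mean_weighted Finset.univ
      (fun _ => 1 / (h:ℝ)) (fun j => ((T j).card : ℝ)) hw hw1 hz
    have hcast : (∑ j : Fin h, ((T j).card : ℝ)) = (S.card : ℝ) := by
      exact_mod_cast congrArg (Nat.cast : ℕ → ℝ) hsumT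
    have hsum' : ∑ j : Fin h, (1 / (h:ℝ)) * ((T j).card : ℝ) = (S.card : ℝ) / h := by
      rw [← Finset.mul_sum, hcast]; ring
    have hAM' : (∏ j, ((T j).card : ℝ) ^ (1 / (h:ℝ))) ≤ γ ^ (-(1:ℝ)/h) := by
      calc (∏ j, ((T j).card : ℝ) ^ (1 / (h:ℝ))) ≤ (S.card : ℝ) / h := by
            rw [← hsum']; exact hAM
        _ ≤ γ ^ (-(1:ℝ)/h) := by
            rw [div_le_iff₀ hhR] at *; linarith [hsize]
    have hLHSnn : (0:ℝ) ≤ ∏ j, ((T j).card : ℝ) ^ (1 / (h:ℝ)) :=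
      Finset.prod_nonneg fun j _ => Real.rpow_nonneg (Nat.cast_nonneg _) _
    have hpow := Real.rpow_le_rpow hLHSnn hAM' (le_of_lt hhR)
    have hL' : (∏ j, ((T j).card : ℝ) ^ (1 / (h:ℝ))) ^ (h:ℝ)
        = ∏ j, ((T j).card : ℝ) := by
      rw [← Real.finset_prod_rpow _ _ (fun j _ => Real.rpow_nonneg (Nat.cast_nonneg _) _)]
      refine Finset.prod_congr rfl fun j _ => ?_
      rw [← Real.rpow_mul (Nat.cast_nonneg _)]
      rw [one_div_mul_cancel (ne_of_gt hhR), Real.rpow_one]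
    have hR' : (γ ^ (-(1:ℝ)/h)) ^ (h:ℝ) = γ⁻¹ := by
      rw [← Real.rpow_mul hγ.le (-(1:ℝ)/h) (h:ℝ)]
      rw [div_mul_cancel₀ _ (ne_of_gt hhR)]
      rw [Real.rpow_neg_one]
    rw [hL', hR'] at hpow
    exact hpow
  have hγL : γ * (L.card : ℝ) ≤ 1 := by
    have : (L.card : ℝ) = ∏ j, ((T j).card : ℝ) := by
      rw [hcardL]; push_cast; rfl
    rw [this]
    calc γ * ∏ j, ((T j).card : ℝ) ≤ γ * γ⁻¹ :=
          mul_le_mul_of_nonneg_left hprod_le hγ.le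
      _ = 1 := mul_inv_cancel₀ (ne_of_gt hγ)
  -- for each left super-node there is a labeling in L covering it
  have hexists : ∀ i : Fin ℓ, ∃ g ∈ L, ∃ u, uPart u = i ∧ ∀ j, E u (g j) := by
    intro i
    obtain ⟨u, hu, hw⟩ := hcov i
    choose w hwS hwj hwE using hw
    refine ⟨w, ?_, u, hu, hwE⟩
    simp only [L, Finset.mem_filter, Finset.mem_univ, true_and]
    exact fun j => ⟨hwS j, hwj j⟩
  have hLne : L.Nonempty := by
    obtain ⟨g, hg, _⟩ := hexists ⟨0, hℓ⟩
    exact ⟨g, hg⟩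
  have hLcardpos : (0:ℝ) < (L.card : ℝ) := by
    exact_mod_cast Finset.card_pos.mpr hLne
  -- total count bound
  have key : ℓ ≤ ∑ g ∈ L, (Finset.univ.filter
      (fun i : Fin ℓ => ∃ u : Vu, uPart u = i ∧ ∀ j, E u (g j))).card := by
    have hswap : ∑ g ∈ L, (Finset.univ.filter
        (fun i : Fin ℓ => ∃ u : Vu, uPart u = i ∧ ∀ j, E u (g j))).card
        = ∑ i : Fin ℓ, (L.filter (fun g => ∃ u : Vu, uPart u = i ∧ ∀ j, E u (g j))).card := by
      simp_rw [Finset.card_filter]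
      exact Finset.sum_comm
    rw [hswap]
    calc ℓ = ∑ _i : Fin ℓ, 1 := by simp
      _ ≤ _ := Finset.sum_le_sum fun i _ => by
          obtain ⟨g, hg, u, hu, hE⟩ := hexists i
          exact Finset.card_pos.mpr ⟨g, Finset.mem_filter.mpr ⟨hg, u, hu, hE⟩⟩
  have hsumfrac : (1:ℝ) ≤ ∑ g ∈ L, frac g := by
    have : ∑ g ∈ L, frac g = (∑ g ∈ L, ((Finset.univ.filter
        (fun i : Fin ℓ => ∃ u : Vu, uPart u = i ∧ ∀ j, E u (g j))).card : ℝ)) / ℓ := by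
      rw [Finset.sum_div]
    rw [this, le_div_iff₀ hℓR, one_mul]
    exact_mod_cast key
  constructor
  · rw [le_div_iff₀ hLcardpos]
    linarith
  · refine Finset.exists_le_of_sum_le hLne ?_
    have : ∑ _g ∈ L, γ = (L.card : ℝ) * γ := by
      rw [Finset.sum_const, nsmul_eq_mul]
    rw [this]
    nlinarith
end

section
/- In the threshold graph built from a code C (as defined), let X ⊆ A be such that for every j ∈ [ℓ] there exists b ∈ B_j adjacent to at least k+1 vertices of X. Then |X| ≥ Col(C), the collision number of C. -/
open scoped Classical

/-- collision property of the threshold graph: if X ⊆ A (vertices are pairs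
    of a part index in [k] and a codeword) is such that for every j ∈ [ℓ] some b ∈ B_j is
    adjacent to at least k+1 vertices of X, then |X| ≥ Col(C). -/
theorem stmt_12 (Alpha : Type) [Fintype Alpha] (r ℓ k : ℕ)
    (C : (Fin r → Alpha) → (Fin ℓ → Alpha))
    (X : Finset (Fin k × (Fin ℓ → Alpha)))
    (hXcode : ∀ a ∈ X, a.2 ∈ Set.range C)
    (hX : ∀ j : Fin ℓ, ∃ b : Fin k → Alpha,
      k + 1 ≤ (X.filter (fun a => a.2 j = b a.1)).card) :
    sInf {s : ℕ | ∃ S : Finset (Fin ℓ → Alpha), ↑S ⊆ Set.range C ∧ S.card = s ∧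
        ∀ j : Fin ℓ, ∃ x ∈ S, ∃ y ∈ S, x ≠ y ∧ x j = y j} ≤ X.card := by
  set S : Finset (Fin ℓ → Alpha) := X.image Prod.snd with hS
  have hmem : (X.image Prod.snd).card ∈ {s : ℕ | ∃ S : Finset (Fin ℓ → Alpha),
      ↑S ⊆ Set.range C ∧ S.card = s ∧
      ∀ j : Fin ℓ, ∃ x ∈ S, ∃ y ∈ S, x ≠ y ∧ x j = y j} := by
    refine ⟨X.image Prod.snd, ?_, rfl, ?_⟩
    · intro c hc
      simp only [Finset.coe_image, Set.mem_image, Finset.mem_coe] at hc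
      obtain ⟨a, ha, rfl⟩ := hc
      exact hXcode a ha
    · intro j
      obtain ⟨b, hb⟩ := hX j
      have hcard : (Finset.univ : Finset (Fin k)).card <
          (X.filter (fun a => a.2 j = b a.1)).card := by
        simpa using lt_of_lt_of_le (Nat.lt_succ_self k) hb
      obtain ⟨x, hx, y, hy, hxy, hfst⟩ :=
        Finset.exists_ne_map_eq_of_card_lt_of_maps_to hcard
          (fun a _ => Finset.mem_univ a.1)
      simp only [Finset.mem_filter] at hx hy
      refine ⟨x.2, Finset.mem_image_of_mem _ hx.1, y.2,
        Finset.mem_image_of_mem _ hy.1, ?_, ?_⟩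
      · intro h
        exact hxy (Prod.ext hfst h)
      · rw [hx.2, hy.2, hfst]
  exact le_trans (Nat.sInf_le hmem) (Finset.card_image_le)
end
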